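/- Let T be an SSYT of shape λ=(λ_1≥λ_2≥0) with entries in {1,2,3} and content μ=(μ_1,μ_2,μ_3), and assume μ_1>μ_3. Then f_{α_1+α_2}(T)≠0 and: (1) if T contains no letter 2, then f_{α_1+α_2}(T) is obtained from T by changing the rightmost letter 1 into a letter 3; (2) otherwise, f_{α_1+α_2}(T) is obtained from T by changing the rightmost letter 1 into a letter 2, and additionally changing the rightmost letter 2 in its first row into a letter 3 when m_2^{(2)}(T)≤m_3^{(1)}(T), respectively the rightmost letter 2 in its second row into a letter 3 when m_2^{(2)}(T)>m_3^{(1)}(T). -/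

import Mathlib

attribute [local instance] Classical.propDecidable

namespace AtomicPaper

/-- Set the entry at cell `(r, c)` (0-indexed row and column) of the tableau `T` to `a`. -/
def setCell (T : List (List ℕ)) (rc : ℕ × ℕ) (a : ℕ) : List (List ℕ) :=
  T.set rc.1 ((T.getD rc.1 []).set rc.2 a)

/-- The row word of `T` together with cell positions: rows are read
right to left, top to bottom; entries are pairs `(letter, (row, column))`. -/
def rowWordP (T : List (List ℕ)) : List (ℕ × (ℕ × ℕ)) :=
  ((T.zipIdx.map Prod.swap).map fun p => (((p.2.zipIdx.map Prod.swap).map fun q => (q.2, (p.1, q.1))).reverse)).flatten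

/-- Bracketing scan for the letters `i`, `i+1` on a positioned word: returns the pair
`(positions of unmatched i+1's in left-to-right order,
  positions of unmatched i's with the rightmost one first)`,
where an `i` immediately matches a later `i+1` (recursive deletion of factors `i (i+1)`
in the subword on the letters `i`, `i+1`). -/
def bracket (i : ℕ) (w : List (ℕ × (ℕ × ℕ))) : List (ℕ × ℕ) × List (ℕ × ℕ) :=
  w.foldl
    (fun (st : List (ℕ × ℕ) × List (ℕ × ℕ)) (p : ℕ × (ℕ × ℕ)) =>
      if p.1 = i then (st.1, p.2 :: st.2)
      else if p.1 = i + 1 then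
        match st.2 with
        | [] => (st.1 ++ [p.2], [])
        | _ :: tail => (st.1, tail)
      else st)
    ([], [])

/-- The Kashiwara crystal operator `f̃_i`: changes the leftmost unmatched letter `i`
(i.e. the leftmost `i` of the reduced word `w_i^red`) into `i+1`; `none` if there is no such letter. -/
def ftil (i : ℕ) (T : List (List ℕ)) : Option (List (List ℕ)) :=
  match (bracket i (rowWordP T)).2.getLast? with
  | none => none
  | some rc => some (setCell T rc (i + 1))

/-- The Kashiwara crystal operator `ẽ_i`: changes the rightmost unmatched letter `i+1`
(i.e. the rightmost `i+1` of the reduced word `w_i^red`) into `i`; `none` if there is no such letter. -/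
def etil (i : ℕ) (T : List (List ℕ)) : Option (List (List ℕ)) :=
  match (bracket i (rowWordP T)).1.getLast? with
  | none => none
  | some rc => some (setCell T rc i)

/-- The crystal Weyl group action of the simple transposition `s_i`:
if `r > s` it changes the `r - s` rightmost unmatched letters `i+1` into `i`,
and otherwise the `s - r` leftmost unmatched letters `i` into `i+1`. -/
def siAct (i : ℕ) (T : List (List ℕ)) : List (List ℕ) :=
  let st := bracket i (rowWordP T)
  if st.2.length < st.1.length then
    (st.1.drop st.2.length).foldl (fun U rc => setCell U rc i) T
  else
    (st.2.drop st.1.length).foldl (fun U rc => setCell U rc (i + 1)) T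

/-- Apply the crystal actions of the listed simple transpositions, leftmost first. -/
def applyWord (l : List ℕ) (T : List (List ℕ)) : List (List ℕ) :=
  l.foldl (fun U i => siAct i U) T

/-- A reduced word (applied leftmost first) for the shortest permutation `w ∈ S_n` with
`w(1) = i` and `w(2) = j` (for `i < j`), i.e. with `w(α_1) = ε_i - ε_j`:
`w = (s_{i-1} ⋯ s_1) ∘ (s_{j-1} ⋯ s_2)`. -/
def wWord (i j : ℕ) : List ℕ := List.range' 2 (j - 2) ++ List.range' 1 (i - 1)

/-- The modified crystal operator `f_α = w ∘ f̃_1 ∘ w⁻¹` for the positive root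
`α = ε_i - ε_j` (`i < j`), where `w` is the shortest permutation with `w(α_1) = α`. -/
def fRoot (i j : ℕ) (T : List (List ℕ)) : Option (List (List ℕ)) :=
  (ftil 1 (applyWord (wWord i j).reverse T)).map (applyWord (wWord i j))

/-- The modified crystal operator `e_α = w ∘ ẽ_1 ∘ w⁻¹` for the positive root
`α = ε_i - ε_j` (`i < j`). -/
def eRoot (i j : ℕ) (T : List (List ℕ)) : Option (List (List ℕ)) :=
  (etil 1 (applyWord (wWord i j).reverse T)).map (applyWord (wWord i j))

/-- `T` is a semistandard Young tableau with entries in `{1, …, n}`: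
the rows (lists of entries, top row first) are nonempty and weakly increasing,
the row lengths are weakly decreasing (partition shape),
the columns are strictly increasing, and all entries lie in `{1, …, n}`. -/
def IsSSYT (n : ℕ) (T : List (List ℕ)) : Prop :=
  (∀ row ∈ T, row ≠ [] ∧ List.Chain' (· ≤ ·) row) ∧
  List.Chain' (fun a b => b ≤ a) (T.map List.length) ∧
  (∀ r c, r + 1 < T.length → c < (T.getD (r + 1) []).length →
      (T.getD r []).getD c 0 < (T.getD (r + 1) []).getD c 0) ∧
  (∀ a ∈ T.flatten, 1 ≤ a ∧ a ≤ n)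

/-- `contentOf T i` is the number of entries of `T` equal to `i` (letters are 1-based). -/
def contentOf (T : List (List ℕ)) : ℕ → ℕ := fun i => T.flatten.count i

/-- `mrow T k i` is the number of entries equal to `i` in row `k` of `T` (0-indexed rows;
row `k` here corresponds to row `k+1` of the paper). -/
def mrow (T : List (List ℕ)) (k i : ℕ) : ℕ := (T.getD k []).count i

/-- Schensted insertion of `x` into a weakly increasing row; returns the new row and
the bumped entry, if any. -/
def insertRow (x : ℕ) : List ℕ → List ℕ × Option ℕ
  | [] => ([x], none)
  | a :: rest =>
    if a ≤ x then
      let p := insertRow x rest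
      (a :: p.1, p.2)
    else (x :: rest, some a)

/-- Schensted row-insertion of `x` into the tableau `T`. -/
def insertTab : List (List ℕ) → ℕ → List (List ℕ)
  | [], x => [[x]]
  | row :: rest, x =>
    let p := insertRow x row
    match p.2 with
    | none => p.1 :: rest
    | some y => p.1 :: insertTab rest y

/-- The cyclage `C(T)`: remove the bottom-left (south-west) entry `x` of `T` and row-insert
`x` into the remaining tableau. (For an empty tableau, or one with an empty last row,
this is the identity.) -/
def cyclage (T : List (List ℕ)) : List (List ℕ) :=
  match T.getLast? with
  | none => T
  | some [] => T
  | some (x :: rest) =>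
    insertTab (T.dropLast ++ if rest = [] then [] else [rest]) x

/-- The cocharge of `T`: the number of cyclage steps needed to reach a one-row tableau. -/
noncomputable def cocharge (T : List (List ℕ)) : ℕ :=
  sInf {k | (cyclage^[k] T).length ≤ 1}

/-- The Lascoux–Schützenberger charge `c(T) = ‖μ‖ - co(T)`, where `μ` is the content of `T`
and `‖μ‖ = Σ_i (i-1) μ_i` (equivalently, the sum over all entries `a` of `T` of `a - 1`). -/
noncomputable def chargeT (T : List (List ℕ)) : ℕ :=
  (T.flatten.sum - T.flatten.length) - cocharge T

/-- The sum `μ_1 + ⋯ + μ_j` of the first `j` parts (1-indexed). -/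
def sumTo (μ : ℕ → ℕ) (j : ℕ) : ℕ := ∑ i ∈ Finset.Icc 1 j, μ i

/-- `μ` (1-indexed) is a partition with at most `n` parts. -/
def IsPartitionFun (n : ℕ) (μ : ℕ → ℕ) : Prop :=
  (∀ i j, 1 ≤ i → i ≤ j → μ j ≤ μ i) ∧ ∀ i, i = 0 ∨ n < i → μ i = 0

/-- Dominance order on partitions (of the same number) with at most `n` parts. -/
def DomLE (n : ℕ) (ν μ : ℕ → ℕ) : Prop :=
  (∀ j, sumTo ν j ≤ sumTo μ j) ∧ sumTo ν n = sumTo μ n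

def DomLT (n : ℕ) (ν μ : ℕ → ℕ) : Prop := DomLE n ν μ ∧ ∃ i, ν i ≠ μ i

/-- `ν` is covered by `μ` in the dominance order on partitions with at most `n` parts. -/
def DomCovers (n : ℕ) (μ ν : ℕ → ℕ) : Prop :=
  DomLT n ν μ ∧ ∀ κ, IsPartitionFun n κ → ¬(DomLT n ν κ ∧ DomLT n κ μ)

/-- `content(T) - α` for the positive root `α = ε_i - ε_j`. -/
def contentMinus (T : List (List ℕ)) (i j : ℕ) : ℕ → ℕ := fun k =>
  if k = i then contentOf T i - 1
  else if k = j then contentOf T j + 1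
  else contentOf T k

/-- A vertex of the modified crystal graph `𝔹(λ)⁺`: an SSYT of shape `λ` with entries in
`{1, …, n}` whose content is a partition. Here `λ` is given as the list of row lengths. -/
def IsVertex (n : ℕ) (lam : List ℕ) (T : List (List ℕ)) : Prop :=
  IsSSYT n T ∧ T.map List.length = lam ∧ IsPartitionFun n (contentOf T)

/-- The edges of the modified crystal graph `𝔹(λ)⁺`: `T ⇢ f_α(T)` for every positive root
`α = ε_i - ε_j` such that `content(T) - α` is a partition covered by `content(T)`
in the dominance order. -/
def ModEdge (n : ℕ) (lam : List ℕ) (T T' : List (List ℕ)) : Prop :=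
  IsVertex n lam T ∧ IsVertex n lam T' ∧
  ∃ i j, 1 ≤ i ∧ i < j ∧ j ≤ n ∧
    IsPartitionFun n (contentMinus T i j) ∧
    DomCovers n (contentOf T) (contentMinus T i j) ∧
    fRoot i j T = some T'

/-- Two tableaux lie in the same connected component of `𝔹(λ)⁺` (undirected reachability). -/
def SameComp (n : ℕ) (lam : List ℕ) : List (List ℕ) → List (List ℕ) → Prop :=
  Relation.ReflTransGen fun a b => ModEdge n lam a b ∨ ModEdge n lam b a

/-- `⟨μ - ν, ρ^∨⟩ = Σ_{j=1}^{n-1} Σ_{i=1}^{j} (μ_i - ν_i)`. -/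
def pairingRho (n : ℕ) (μ ν : ℕ → ℕ) : ℕ :=
  ∑ j ∈ Finset.Icc 1 (n - 1), (sumTo μ j - sumTo ν j)

/-- `f_{α_1 + α_2} = s_2 ∘ f̃_1 ∘ s_2` (type `A_2`). -/
def fA12 (T : List (List ℕ)) : Option (List (List ℕ)) := (ftil 1 (siAct 2 T)).map (siAct 2)

/-- `f_2 = s_1 ∘ f_{α_1+α_2} ∘ s_1` (type `A_2`). -/
def f2op (T : List (List ℕ)) : Option (List (List ℕ)) := (fA12 (siAct 1 T)).map (siAct 1)

/-- `e_{α_1 + α_2} = s_2 ∘ ẽ_1 ∘ s_2` (type `A_2`). -/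
def eA12 (T : List (List ℕ)) : Option (List (List ℕ)) := (etil 1 (siAct 2 T)).map (siAct 2)

/-- `e_2 = s_1 ∘ e_{α_1+α_2} ∘ s_1` (type `A_2`). -/
def e2op (T : List (List ℕ)) : Option (List (List ℕ)) := (eA12 (siAct 1 T)).map (siAct 1)


-- helpers
def blk (a b c : ℕ) : List ℕ :=
  List.replicate a 1 ++ List.replicate b 2 ++ List.replicate c 3

lemma blk_length (a b c : ℕ) : (blk a b c).length = a + b + c := by
  simp [blk]; omega

lemma getD_blk (a b c n : ℕ) :
    (blk a b c).getD n 0 =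
      if n < a then 1 else if n < a + b then 2 else if n < a + b + c then 3 else 0 := by
  unfold blk
  rcases lt_or_ge n (a + b) with h | h
  · rw [List.getD_append _ _ _ _ (by simp; omega)]
    rcases lt_or_ge n a with h2 | h2
    · rw [List.getD_append _ _ _ _ (by simpa using h2), if_pos h2,
        List.getD_eq_getElem _ _ (by simpa using h2), List.getElem_replicate]
    · rw [List.getD_append_right _ _ _ _ (by simpa using h2), if_neg (by omega), if_pos h,
        List.getD_eq_getElem _ _ (by simp; omega), List.getElem_replicate]
  · rw [List.getD_append_right _ _ _ _ (by simp; omega), if_neg (by omega), if_neg (by omega)]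
    simp only [List.length_append, List.length_replicate]
    rcases lt_or_ge n (a + b + c) with h3 | h3
    · rw [if_pos h3, List.getD_eq_getElem _ _ (by simp; omega), List.getElem_replicate]
    · rw [if_neg (by omega), List.getD_eq_default _ _ (by simp; omega)]

lemma row_ext {l r : List ℕ} (h1 : l.length = r.length)
    (h2 : ∀ n, l.getD n 0 = r.getD n 0) : l = r := by
  refine List.ext_getElem h1 fun n hn1 hn2 => ?_
  rw [← List.getD_eq_getElem l 0 hn1, ← List.getD_eq_getElem r 0 hn2, h2]

lemma getD_set (l : List ℕ) (m v n : ℕ) :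
    (l.set m v).getD n 0 = if m = n ∧ n < l.length then v else l.getD n 0 := by
  rcases lt_or_ge n l.length with h | h
  · rw [List.getD_eq_getElem _ _ (by simpa using h), List.getElem_set,
      List.getD_eq_getElem _ _ h]
    split_ifs with h1 h2 h2 <;> simp_all
  · rw [List.getD_eq_default _ _ (by simpa using h), List.getD_eq_default _ _ h,
      if_neg (by omega)]

lemma foldl_set_length (v : ℕ) : ∀ (qs : List ℕ) (l : List ℕ),
    (qs.foldl (fun L c => L.set c v) l).length = l.length := by
  intro qs
  induction qs with
  | nil => intro l; rfl
  | cons q qs ih => intro l; rw [List.foldl_cons, ih, List.length_set]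

lemma foldl_set_getD (v : ℕ) : ∀ (qs : List ℕ) (l : List ℕ) (n : ℕ),
    (qs.foldl (fun L c => L.set c v) l).getD n 0 =
      if n ∈ qs ∧ n < l.length then v else l.getD n 0 := by
  intro qs
  induction qs with
  | nil => intro l n; simp
  | cons q qs ih =>
    intro l n
    rw [List.foldl_cons, ih, List.length_set, getD_set]
    by_cases hn : n < l.length
    · by_cases hq : n ∈ qs
      · rw [if_pos ⟨hq, hn⟩, if_pos ⟨List.mem_cons_of_mem _ hq, hn⟩]
      · rw [if_neg (by tauto)]
        by_cases he : q = n
        · rw [if_pos ⟨he, hn⟩, if_pos ⟨by simp [he], hn⟩]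
        · rw [if_neg (by tauto), if_neg ?_]
          rintro ⟨h1, -⟩
          rcases List.mem_cons.1 h1 with h | h
          · exact he h.symm
          · exact hq h
    · rw [if_neg (by tauto), if_neg (by tauto), if_neg (by tauto)]

-- setCell on explicit tableaux
lemma setCell_two0 (r1 r2 : List ℕ) (j v : ℕ) :
    setCell [r1, r2] (0, j) v = [r1.set j v, r2] := by simp [setCell]

lemma setCell_two1 (r1 r2 : List ℕ) (j v : ℕ) :
    setCell [r1, r2] (1, j) v = [r1, r2.set j v] := by simp [setCell]

lemma setCell_one0 (r1 : List ℕ) (j v : ℕ) :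
    setCell [r1] (0, j) v = [r1.set j v] := by simp [setCell]

lemma setCell_one1 (r1 : List ℕ) (j v : ℕ) :
    setCell [r1] (1, j) v = [r1] := by simp [setCell]

lemma foldl_setCell_map0_two (v : ℕ) : ∀ (qs : List ℕ) (r1 r2 : List ℕ),
    List.foldl (fun U rc => setCell U rc v) [r1, r2] (qs.map (Prod.mk 0)) =
      [qs.foldl (fun L c => L.set c v) r1, r2] := by
  intro qs
  induction qs with
  | nil => intro r1 r2; rfl
  | cons q qs ih => intro r1 r2; simp only [List.map_cons, List.foldl_cons, setCell_two0, ih]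

lemma foldl_setCell_map1_two (v : ℕ) : ∀ (qs : List ℕ) (r1 r2 : List ℕ),
    List.foldl (fun U rc => setCell U rc v) [r1, r2] (qs.map (Prod.mk 1)) =
      [r1, qs.foldl (fun L c => L.set c v) r2] := by
  intro qs
  induction qs with
  | nil => intro r1 r2; rfl
  | cons q qs ih => intro r1 r2; simp only [List.map_cons, List.foldl_cons, setCell_two1, ih]

lemma foldl_setCell_map0_one (v : ℕ) : ∀ (qs : List ℕ) (r1 : List ℕ),
    List.foldl (fun U rc => setCell U rc v) [r1] (qs.map (Prod.mk 0)) =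
      [qs.foldl (fun L c => L.set c v) r1] := by
  intro qs
  induction qs with
  | nil => intro r1; rfl
  | cons q qs ih => intro r1; simp only [List.map_cons, List.foldl_cons, setCell_one0, ih]



-- words
def wline (r : ℕ) (l : List ℕ) : List (ℕ × (ℕ × ℕ)) :=
  (((l.zipIdx.map Prod.swap).map fun q => (q.2, (r, q.1))).reverse)

def runW (x r s k : ℕ) : List (ℕ × (ℕ × ℕ)) :=
  ((List.range' s k).map fun j => (x, (r, j))).reverse

lemma runW_zero (x r s : ℕ) : runW x r s 0 = [] := rfl

lemma runW_succ (x r s k : ℕ) : runW x r s (k + 1) = runW x r (s + 1) k ++ [(x, (r, s))] := by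
  simp [runW, List.range'_succ]

lemma rowWordP_two (l1 l2 : List ℕ) : rowWordP [l1, l2] = wline 0 l1 ++ wline 1 l2 := by
  simp [rowWordP, wline]

lemma rowWordP_one (l1 : List ℕ) : rowWordP [l1] = wline 0 l1 := by
  simp [rowWordP, wline]

lemma map_enumFrom_replicate (r x : ℕ) : ∀ (k s : ℕ),
    (((List.replicate k x).zipIdx s).map Prod.swap).map (fun q => (q.2, (r, q.1))) =
      (List.range' s k).map fun j => (x, (r, j)) := by
  intro k
  induction k with
  | zero => intro s; rfl
  | succ k ih => intro s; simp only [List.replicate_succ, List.zipIdx_cons, List.map_cons, Prod.swap_prod_mk,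
      List.range'_succ, ih]

lemma wline_blk (r a b c : ℕ) :
    wline r (blk a b c) = runW 3 r (a + b) c ++ runW 2 r a b ++ runW 1 r 0 a := by
  unfold wline blk runW
  simp only [List.zipIdx_append, List.map_append, List.reverse_append]
  rw [map_enumFrom_replicate, map_enumFrom_replicate,
    map_enumFrom_replicate]
  simp only [List.length_replicate, List.length_append, List.append_assoc, Nat.zero_add]

-- bracket
def bstep (i : ℕ) : (List (ℕ × ℕ) × List (ℕ × ℕ)) → (ℕ × (ℕ × ℕ)) → (List (ℕ × ℕ) × List (ℕ × ℕ)) :=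
  fun st p =>
      if p.1 = i then (st.1, p.2 :: st.2)
      else if p.1 = i + 1 then
        match st.2 with
        | [] => (st.1 ++ [p.2], [])
        | _ :: tail => (st.1, tail)
      else st

lemma bracket_eq_foldl (i : ℕ) (w : List (ℕ × (ℕ × ℕ))) :
    bracket i w = w.foldl (bstep i) ([], []) := rfl

lemma fold_skip {x i : ℕ} (hx1 : x ≠ i) (hx2 : x ≠ i + 1) (r : ℕ) : ∀ (k s : ℕ) st,
    List.foldl (bstep i) st (runW x r s k) = st := by
  intro k
  induction k with
  | zero => intro s st; rfl
  | succ k ih =>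
    intro s st
    rw [runW_succ, List.foldl_append, ih]
    simp [bstep, hx1, hx2]

lemma fold_push (i r : ℕ) : ∀ (k s : ℕ) st,
    List.foldl (bstep i) st (runW i r s k) =
      (st.1, (List.range' s k).map (Prod.mk r) ++ st.2) := by
  intro k
  induction k with
  | zero => intro s st; rfl
  | succ k ih =>
    intro s st
    rw [runW_succ, List.foldl_append, ih]
    simp [bstep, List.range'_succ]

lemma bstep_pop_nil (i : ℕ) (A : List (ℕ × ℕ)) (p : ℕ × ℕ) :
    bstep i (A, ([] : List (ℕ × ℕ))) (i + 1, p) = (A ++ [p], []) := by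
  unfold bstep
  rw [if_neg (show ¬(i + 1 = i) by omega), if_pos rfl]

lemma bstep_pop_cons (i : ℕ) (A : List (ℕ × ℕ)) (h : ℕ × ℕ) (t : List (ℕ × ℕ)) (p : ℕ × ℕ) :
    bstep i (A, h :: t) (i + 1, p) = (A, t) := by
  unfold bstep
  rw [if_neg (show ¬(i + 1 = i) by omega), if_pos rfl]

lemma fold_pop (i r : ℕ) : ∀ (k s : ℕ) st,
    List.foldl (bstep i) st (runW (i + 1) r s k) =
      (st.1 ++ ((List.range' s (k - st.2.length)).map (Prod.mk r)).reverse, st.2.drop k) := by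
  intro k
  induction k with
  | zero => intro s st; cases st; simp [runW_zero]
  | succ k ih =>
    intro s st
    rw [runW_succ, List.foldl_append, ih]
    rcases h2 : st.2.drop k with - | ⟨h, t⟩
    · have hlen : st.2.length ≤ k := by
        have := congrArg List.length h2
        simp only [List.length_drop, List.length_nil] at this
        omega
      have h1 : k + 1 - st.2.length = (k - st.2.length) + 1 := by omega
      have h3 : st.2.drop (k + 1) = [] := by
        apply List.drop_eq_nil_of_le; omega
      rw [List.foldl_cons, List.foldl_nil, bstep_pop_nil, h1, h3, List.range'_succ]
      simp [List.append_assoc]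
    · have hlen : k < st.2.length := by
        by_contra hc
        rw [List.drop_eq_nil_of_le (by omega)] at h2
        exact absurd h2 (by simp)
      have h1 : k + 1 - st.2.length = 0 := by omega
      have h0 : k - st.2.length = 0 := by omega
      have h3 : st.2.drop (k + 1) = t := by
        rw [← List.tail_drop, h2]; rfl
      rw [List.foldl_cons, List.foldl_nil, bstep_pop_cons, h1, h0, h3]
      simp

lemma drop_map_range' {α : Type*} (f : ℕ → α) (n s k : ℕ) :
    ((List.range' s k).map f).drop n = (List.range' (s + n) (k - n)).map f := by
  rcases le_or_gt n k with h | h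
  · have : List.range' s k = List.range' s n ++ List.range' (s + n) (k - n) := by
      have := List.range'_append (s := s) (m := n) (n := k - n) (step := 1)
      simp only [Nat.mul_one, Nat.one_mul] at this
      rw [this]; congr 1; omega
    rw [this, List.map_append, List.drop_left' (by simp)]
  · rw [List.drop_eq_nil_of_le (by simp; omega), Nat.sub_eq_zero_of_le (by omega)]
    rfl

lemma drop_rev_map_range' {α : Type*} (f : ℕ → α) (n s k : ℕ) :
    (((List.range' s k).map f).reverse).drop n = ((List.range' s (k - n)).map f).reverse := by
  rcases le_or_gt n k with h | h
  · have : List.range' s k = List.range' s (k - n) ++ List.range' (s + (k - n)) n := by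
      have := List.range'_append (s := s) (m := k - n) (n := n) (step := 1)
      simp only [Nat.mul_one, Nat.one_mul] at this
      rw [this]; congr 1; omega
    rw [this, List.map_append, List.reverse_append, List.drop_left' (by simp)]
  · rw [List.drop_eq_nil_of_le (by simp; omega), Nat.sub_eq_zero_of_le (by omega)]
    rfl



-- bracket closed forms
lemma bracket2_two (a b c d e : ℕ) :
    bracket 2 (rowWordP [blk a b c, blk 0 d e]) =
      (((List.range' (a + b) c).map (Prod.mk 0)).reverse ++
         ((List.range' d (e - b)).map (Prod.mk 1)).reverse,
       (List.range' 0 d).map (Prod.mk 1) ++ (List.range' (a + e) (b - e)).map (Prod.mk 0)) := by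
  have s1 : List.foldl (bstep 2) (([] : List (ℕ × ℕ)), ([] : List (ℕ × ℕ)))
      (runW (2 + 1) 0 (a + b) c) =
      (((List.range' (a + b) c).map (Prod.mk 0)).reverse, []) := by
    rw [fold_pop]; simp
  have s2 : List.foldl (bstep 2)
      ((((List.range' (a + b) c).map (Prod.mk 0)).reverse : List (ℕ × ℕ)), ([] : List (ℕ × ℕ)))
      (runW 2 0 a b) =
      (((List.range' (a + b) c).map (Prod.mk 0)).reverse, (List.range' a b).map (Prod.mk 0)) := by
    rw [fold_push]; simp
  have s3 : List.foldl (bstep 2)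
      (((List.range' (a + b) c).map (Prod.mk 0)).reverse, (List.range' a b).map (Prod.mk 0))
      (runW 1 0 0 a) =
      (((List.range' (a + b) c).map (Prod.mk 0)).reverse, (List.range' a b).map (Prod.mk 0)) :=
    fold_skip (by omega) (by omega) _ _ _ _
  have s4 : List.foldl (bstep 2)
      (((List.range' (a + b) c).map (Prod.mk 0)).reverse, (List.range' a b).map (Prod.mk 0))
      (runW (2 + 1) 1 (0 + d) e) =
      (((List.range' (a + b) c).map (Prod.mk 0)).reverse ++
        ((List.range' d (e - b)).map (Prod.mk 1)).reverse,
       (List.range' (a + e) (b - e)).map (Prod.mk 0)) := by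
    rw [fold_pop]; simp [drop_map_range']
  have s5 : List.foldl (bstep 2)
      (((List.range' (a + b) c).map (Prod.mk 0)).reverse ++
        ((List.range' d (e - b)).map (Prod.mk 1)).reverse,
       (List.range' (a + e) (b - e)).map (Prod.mk 0))
      (runW 2 1 0 d) =
      (((List.range' (a + b) c).map (Prod.mk 0)).reverse ++
        ((List.range' d (e - b)).map (Prod.mk 1)).reverse,
       (List.range' 0 d).map (Prod.mk 1) ++ (List.range' (a + e) (b - e)).map (Prod.mk 0)) := by
    rw [fold_push]
  rw [bracket_eq_foldl, rowWordP_two, wline_blk, wline_blk, show (3 : ℕ) = 2 + 1 from rfl]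
  simp only [List.foldl_append]
  rw [s1, s2, s3, s4, s5, runW_zero, List.foldl_nil]

lemma bracket2_one (a b c : ℕ) :
    bracket 2 (rowWordP [blk a b c]) =
      (((List.range' (a + b) c).map (Prod.mk 0)).reverse, (List.range' a b).map (Prod.mk 0)) := by
  have s1 : List.foldl (bstep 2) (([] : List (ℕ × ℕ)), ([] : List (ℕ × ℕ)))
      (runW (2 + 1) 0 (a + b) c) =
      (((List.range' (a + b) c).map (Prod.mk 0)).reverse, []) := by
    rw [fold_pop]; simp
  have s2 : List.foldl (bstep 2)
      ((((List.range' (a + b) c).map (Prod.mk 0)).reverse : List (ℕ × ℕ)), ([] : List (ℕ × ℕ)))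
      (runW 2 0 a b) =
      (((List.range' (a + b) c).map (Prod.mk 0)).reverse, (List.range' a b).map (Prod.mk 0)) := by
    rw [fold_push]; simp
  rw [bracket_eq_foldl, rowWordP_one, wline_blk, show (3 : ℕ) = 2 + 1 from rfl]
  simp only [List.foldl_append]
  rw [s1, s2, fold_skip (by omega) (by omega)]

lemma bracket1_two (a b c d e : ℕ) :
    bracket 1 (rowWordP [blk a b c, blk 0 d e]) =
      (((List.range' a b).map (Prod.mk 0)).reverse ++
         ((List.range' 0 (d - a)).map (Prod.mk 1)).reverse,
       (List.range' d (a - d)).map (Prod.mk 0)) := by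
  have s2 : List.foldl (bstep 1) (([] : List (ℕ × ℕ)), ([] : List (ℕ × ℕ)))
      (runW (1 + 1) 0 a b) =
      (((List.range' a b).map (Prod.mk 0)).reverse, []) := by
    rw [fold_pop]; simp
  have s3 : List.foldl (bstep 1)
      ((((List.range' a b).map (Prod.mk 0)).reverse : List (ℕ × ℕ)), ([] : List (ℕ × ℕ)))
      (runW 1 0 0 a) =
      (((List.range' a b).map (Prod.mk 0)).reverse, (List.range' 0 a).map (Prod.mk 0)) := by
    rw [fold_push]; simp
  have s5 : List.foldl (bstep 1)
      (((List.range' a b).map (Prod.mk 0)).reverse, (List.range' 0 a).map (Prod.mk 0))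
      (runW (1 + 1) 1 0 d) =
      (((List.range' a b).map (Prod.mk 0)).reverse ++
        ((List.range' 0 (d - a)).map (Prod.mk 1)).reverse,
       (List.range' d (a - d)).map (Prod.mk 0)) := by
    rw [fold_pop]; simp [drop_map_range']
  have s1 : List.foldl (bstep 1) (([] : List (ℕ × ℕ)), ([] : List (ℕ × ℕ)))
      (runW 3 0 (a + b) c) = (([] : List (ℕ × ℕ)), ([] : List (ℕ × ℕ))) :=
    fold_skip (by omega) (by omega) _ _ _ _
  have s4 : List.foldl (bstep 1)
      (((List.range' a b).map (Prod.mk 0)).reverse, (List.range' 0 a).map (Prod.mk 0))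
      (runW 3 1 (0 + d) e) =
      (((List.range' a b).map (Prod.mk 0)).reverse, (List.range' 0 a).map (Prod.mk 0)) :=
    fold_skip (by omega) (by omega) _ _ _ _
  rw [bracket_eq_foldl, rowWordP_two, wline_blk, wline_blk, show (2 : ℕ) = 1 + 1 from rfl]
  simp only [List.foldl_append]
  rw [s1, s2, s3, s4, s5, runW_zero, List.foldl_nil]

lemma bracket1_one (a b c : ℕ) :
    bracket 1 (rowWordP [blk a b c]) =
      (((List.range' a b).map (Prod.mk 0)).reverse, (List.range' 0 a).map (Prod.mk 0)) := by
  have s2 : List.foldl (bstep 1) (([] : List (ℕ × ℕ)), ([] : List (ℕ × ℕ)))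
      (runW (1 + 1) 0 a b) =
      (((List.range' a b).map (Prod.mk 0)).reverse, []) := by
    rw [fold_pop]; simp
  have s3 : List.foldl (bstep 1)
      ((((List.range' a b).map (Prod.mk 0)).reverse : List (ℕ × ℕ)), ([] : List (ℕ × ℕ)))
      (runW 1 0 0 a) =
      (((List.range' a b).map (Prod.mk 0)).reverse, (List.range' 0 a).map (Prod.mk 0)) := by
    rw [fold_push]; simp
  have s1 : List.foldl (bstep 1) (([] : List (ℕ × ℕ)), ([] : List (ℕ × ℕ)))
      (runW 3 0 (a + b) c) = (([] : List (ℕ × ℕ)), ([] : List (ℕ × ℕ))) :=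
    fold_skip (by omega) (by omega) _ _ _ _
  rw [bracket_eq_foldl, rowWordP_one, wline_blk, show (2 : ℕ) = 1 + 1 from rfl]
  simp only [List.foldl_append]
  rw [s1, s2, s3]



lemma pair_rows_eq {r1 r2 r1' r2' : List ℕ} (h1 : r1 = r1') (h2 : r2 = r2') :
    [r1, r2] = [r1', r2'] := by rw [h1, h2]

lemma single_row_eq {r1 r1' : List ℕ} (h1 : r1 = r1') : [r1] = [r1'] := by rw [h1]

lemma siAct2_M1 (a b c d e : ℕ) (he : e ≤ b) (hd : d ≤ c) :
    siAct 2 [blk a b c, blk 0 d e] = [blk a (c + e - d) (d + b - e), blk 0 d e] := by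
  simp only [siAct]
  rw [bracket2_two]
  simp only [List.length_append, List.length_reverse, List.length_map, List.length_range']
  split_ifs with hg
  · rw [List.drop_append, List.length_reverse, List.length_map,
      List.length_range', drop_rev_map_range', drop_rev_map_range',
      ← List.map_reverse, ← List.map_reverse, List.foldl_append,
      foldl_setCell_map0_two, foldl_setCell_map1_two]
    refine pair_rows_eq (row_ext ?_ ?_) (row_ext ?_ ?_)
    · simp only [foldl_set_length, blk_length] <;> omega
    · intro n
      rw [foldl_set_getD]
      simp only [blk_length, getD_blk, List.mem_reverse, List.mem_range'_1]
      split_ifs <;> omega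
    · simp only [foldl_set_length, blk_length] <;> omega
    · intro n
      rw [foldl_set_getD]
      simp only [blk_length, getD_blk, List.mem_reverse, List.mem_range'_1]
      split_ifs <;> omega
  · rw [List.drop_append, List.length_map, List.length_range',
      drop_map_range', drop_map_range', List.foldl_append,
      foldl_setCell_map1_two, foldl_setCell_map0_two]
    refine pair_rows_eq (row_ext ?_ ?_) (row_ext ?_ ?_)
    · simp only [foldl_set_length, blk_length] <;> omega
    · intro n
      rw [foldl_set_getD]
      simp only [blk_length, getD_blk, List.mem_range'_1]
      split_ifs <;> omega
    · simp only [foldl_set_length, blk_length] <;> omega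
    · intro n
      rw [foldl_set_getD]
      simp only [blk_length, getD_blk, List.mem_range'_1]
      split_ifs <;> omega

lemma siAct2_M2 (a b c d e : ℕ) (he : e ≤ b) (hd : c ≤ d) :
    siAct 2 [blk a b c, blk 0 d e] = [blk a e (b + c - e), blk 0 c (d + e - c)] := by
  simp only [siAct]
  rw [bracket2_two]
  simp only [List.length_append, List.length_reverse, List.length_map, List.length_range']
  split_ifs with hg
  · rw [List.drop_append, List.length_reverse, List.length_map,
      List.length_range', drop_rev_map_range', drop_rev_map_range',
      ← List.map_reverse, ← List.map_reverse, List.foldl_append,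
      foldl_setCell_map0_two, foldl_setCell_map1_two]
    refine pair_rows_eq (row_ext ?_ ?_) (row_ext ?_ ?_)
    · simp only [foldl_set_length, blk_length] <;> omega
    · intro n
      rw [foldl_set_getD]
      simp only [blk_length, getD_blk, List.mem_reverse, List.mem_range'_1]
      split_ifs <;> omega
    · simp only [foldl_set_length, blk_length] <;> omega
    · intro n
      rw [foldl_set_getD]
      simp only [blk_length, getD_blk, List.mem_reverse, List.mem_range'_1]
      split_ifs <;> omega
  · rw [List.drop_append, List.length_map, List.length_range',
      drop_map_range', drop_map_range', List.foldl_append,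
      foldl_setCell_map1_two, foldl_setCell_map0_two]
    refine pair_rows_eq (row_ext ?_ ?_) (row_ext ?_ ?_)
    · simp only [foldl_set_length, blk_length] <;> omega
    · intro n
      rw [foldl_set_getD]
      simp only [blk_length, getD_blk, List.mem_range'_1]
      split_ifs <;> omega
    · simp only [foldl_set_length, blk_length] <;> omega
    · intro n
      rw [foldl_set_getD]
      simp only [blk_length, getD_blk, List.mem_range'_1]
      split_ifs <;> omega

lemma siAct2_M3 (a b c d e : ℕ) (he : b ≤ e) (hd : d ≤ c) :
    siAct 2 [blk a b c, blk 0 d e] = [blk a (b + c - d) d, blk 0 (d + e - b) b] := by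
  simp only [siAct]
  rw [bracket2_two]
  simp only [List.length_append, List.length_reverse, List.length_map, List.length_range']
  split_ifs with hg
  · rw [List.drop_append, List.length_reverse, List.length_map,
      List.length_range', drop_rev_map_range', drop_rev_map_range',
      ← List.map_reverse, ← List.map_reverse, List.foldl_append,
      foldl_setCell_map0_two, foldl_setCell_map1_two]
    refine pair_rows_eq (row_ext ?_ ?_) (row_ext ?_ ?_)
    · simp only [foldl_set_length, blk_length] <;> omega
    · intro n
      rw [foldl_set_getD]
      simp only [blk_length, getD_blk, List.mem_reverse, List.mem_range'_1]
      split_ifs <;> omega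
    · simp only [foldl_set_length, blk_length] <;> omega
    · intro n
      rw [foldl_set_getD]
      simp only [blk_length, getD_blk, List.mem_reverse, List.mem_range'_1]
      split_ifs <;> omega
  · rw [List.drop_append, List.length_map, List.length_range',
      drop_map_range', drop_map_range', List.foldl_append,
      foldl_setCell_map1_two, foldl_setCell_map0_two]
    refine pair_rows_eq (row_ext ?_ ?_) (row_ext ?_ ?_)
    · simp only [foldl_set_length, blk_length] <;> omega
    · intro n
      rw [foldl_set_getD]
      simp only [blk_length, getD_blk, List.mem_range'_1]
      split_ifs <;> omega
    · simp only [foldl_set_length, blk_length] <;> omega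
    · intro n
      rw [foldl_set_getD]
      simp only [blk_length, getD_blk, List.mem_range'_1]
      split_ifs <;> omega

lemma siAct2_M4 (a b c d e : ℕ) (he : b ≤ e) (hd : c ≤ d) :
    siAct 2 [blk a b c, blk 0 d e] = [blk a b c, blk 0 (c + e - b) (b + d - c)] := by
  simp only [siAct]
  rw [bracket2_two]
  simp only [List.length_append, List.length_reverse, List.length_map, List.length_range']
  split_ifs with hg
  · rw [List.drop_append, List.length_reverse, List.length_map,
      List.length_range', drop_rev_map_range', drop_rev_map_range',
      ← List.map_reverse, ← List.map_reverse, List.foldl_append,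
      foldl_setCell_map0_two, foldl_setCell_map1_two]
    refine pair_rows_eq (row_ext ?_ ?_) (row_ext ?_ ?_)
    · simp only [foldl_set_length, blk_length] <;> omega
    · intro n
      rw [foldl_set_getD]
      simp only [blk_length, getD_blk, List.mem_reverse, List.mem_range'_1]
      split_ifs <;> omega
    · simp only [foldl_set_length, blk_length] <;> omega
    · intro n
      rw [foldl_set_getD]
      simp only [blk_length, getD_blk, List.mem_reverse, List.mem_range'_1]
      split_ifs <;> omega
  · rw [List.drop_append, List.length_map, List.length_range',
      drop_map_range', drop_map_range', List.foldl_append,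
      foldl_setCell_map1_two, foldl_setCell_map0_two]
    refine pair_rows_eq (row_ext ?_ ?_) (row_ext ?_ ?_)
    · simp only [foldl_set_length, blk_length] <;> omega
    · intro n
      rw [foldl_set_getD]
      simp only [blk_length, getD_blk, List.mem_range'_1]
      split_ifs <;> omega
    · simp only [foldl_set_length, blk_length] <;> omega
    · intro n
      rw [foldl_set_getD]
      simp only [blk_length, getD_blk, List.mem_range'_1]
      split_ifs <;> omega


lemma siAct2_one (a b c : ℕ) : siAct 2 [blk a b c] = [blk a c b] := by
  simp only [siAct]
  rw [bracket2_one]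
  simp only [List.length_reverse, List.length_map, List.length_range']
  split_ifs with hg
  · rw [drop_rev_map_range', ← List.map_reverse, foldl_setCell_map0_one]
    refine single_row_eq (row_ext ?_ ?_)
    · simp only [foldl_set_length, blk_length] <;> omega
    · intro n
      rw [foldl_set_getD]
      simp only [blk_length, getD_blk, List.mem_reverse, List.mem_range'_1]
      split_ifs <;> omega
  · rw [drop_map_range', foldl_setCell_map0_one]
    refine single_row_eq (row_ext ?_ ?_)
    · simp only [foldl_set_length, blk_length] <;> omega
    · intro n
      rw [foldl_set_getD]
      simp only [blk_length, getD_blk, List.mem_range'_1]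
      split_ifs <;> omega

lemma ftil1_two (a b c d e : ℕ) (hd : d < a) :
    ftil 1 [blk a b c, blk 0 d e] = some [blk (a - 1) (b + 1) c, blk 0 d e] := by
  obtain ⟨k, hk⟩ : ∃ k, a - d = k + 1 := ⟨a - d - 1, by omega⟩
  unfold ftil
  rw [bracket1_two, hk, List.range'_concat, List.map_append, List.map_singleton,
    List.getLast?_concat]
  refine congrArg some ?_
  rw [setCell_two0]
  refine pair_rows_eq (row_ext ?_ ?_) rfl
  · simp only [List.length_set, blk_length] <;> omega
  · intro n
    rw [getD_set]
    simp only [blk_length, getD_blk]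
    split_ifs <;> omega

lemma ftil1_one (a b c : ℕ) (ha : 1 ≤ a) :
    ftil 1 [blk a b c] = some [blk (a - 1) (b + 1) c] := by
  obtain ⟨k, hk⟩ : ∃ k, a = k + 1 := ⟨a - 1, by omega⟩
  unfold ftil
  rw [bracket1_one, hk, List.range'_concat, List.map_append, List.map_singleton,
    List.getLast?_concat]
  refine congrArg some ?_
  rw [setCell_one0]
  refine single_row_eq (row_ext ?_ ?_)
  · simp only [List.length_set, blk_length] <;> omega
  · intro n
    rw [getD_set]
    simp only [blk_length, getD_blk]
    split_ifs <;> omega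



lemma blk_congr {a b c a' b' c' : ℕ} (h1 : a = a') (h2 : b = b') (h3 : c = c') :
    blk a b c = blk a' b' c' := by rw [h1, h2, h3]

lemma fA12_one (a b c : ℕ) (h3 : c < a) :
    fA12 [blk a b c] = some [blk (a - 1) b (c + 1)] := by
  unfold fA12
  rw [siAct2_one, ftil1_one _ _ _ (by omega), Option.map_some, siAct2_one]

lemma fA12_two (a b c d e : ℕ) (h3 : c + e < a) :
    fA12 [blk a b c, blk 0 d e] =
      if d ≤ c then some [blk (a - 1) b (c + 1), blk 0 d e]
      else some [blk (a - 1) (b + 1) c, blk 0 (d - 1) (e + 1)] := by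
  unfold fA12
  rcases le_or_gt e b with he | he <;> rcases le_or_gt d c with hd | hd
  · -- e ≤ b, d ≤ c
    rw [siAct2_M1 a b c d e he hd, ftil1_two _ _ _ _ _ (by omega), Option.map_some,
      siAct2_M1 (a - 1) (c + e - d + 1) (d + b - e) d e (by omega) (by omega), if_pos hd]
    exact congrArg some (pair_rows_eq
      (blk_congr rfl (by omega) (by omega)) (blk_congr rfl rfl rfl))
  · -- e ≤ b, c < d
    rw [siAct2_M2 a b c d e he (by omega), ftil1_two _ _ _ _ _ (by omega), Option.map_some]
    rcases le_or_gt d (c + 1) with hd2 | hd2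
    · rw [siAct2_M1 (a - 1) (e + 1) (b + c - e) c (d + e - c) (by omega) (by omega),
        if_neg (by omega)]
      exact congrArg some (pair_rows_eq
        (blk_congr rfl (by omega) (by omega)) (blk_congr rfl (by omega) (by omega)))
    · rw [siAct2_M3 (a - 1) (e + 1) (b + c - e) c (d + e - c) (by omega) (by omega),
        if_neg (by omega)]
      exact congrArg some (pair_rows_eq
        (blk_congr rfl (by omega) (by omega)) (blk_congr rfl (by omega) (by omega)))
  · -- b < e, d ≤ c
    rw [siAct2_M3 a b c d e (by omega) hd, ftil1_two _ _ _ _ _ (by omega), Option.map_some,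
      siAct2_M2 (a - 1) (b + c - d + 1) d (d + e - b) b (by omega) (by omega), if_pos hd]
    exact congrArg some (pair_rows_eq
      (blk_congr rfl (by omega) (by omega)) (blk_congr rfl (by omega) (by omega)))
  · -- b < e, c < d
    rw [siAct2_M4 a b c d e (by omega) (by omega), ftil1_two _ _ _ _ _ (by omega),
      Option.map_some]
    rcases le_or_gt d (c + 1) with hd2 | hd2
    · rw [siAct2_M2 (a - 1) (b + 1) c (c + e - b) (b + d - c) (by omega) (by omega),
        if_neg (by omega)]
      exact congrArg some (pair_rows_eq
        (blk_congr rfl (by omega) (by omega)) (blk_congr rfl (by omega) (by omega)))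
    · rw [siAct2_M4 (a - 1) (b + 1) c (c + e - b) (b + d - c) (by omega) (by omega),
        if_neg (by omega)]
      exact congrArg some (pair_rows_eq
        (blk_congr rfl rfl rfl) (blk_congr rfl (by omega) (by omega)))



lemma count_blk1 (a b c : ℕ) : (blk a b c).count 1 = a := by
  simp [blk, List.count_append, List.count_replicate]

lemma count_blk2 (a b c : ℕ) : (blk a b c).count 2 = b := by
  simp [blk, List.count_append, List.count_replicate]

lemma count_blk3 (a b c : ℕ) : (blk a b c).count 3 = c := by
  simp [blk, List.count_append, List.count_replicate]

lemma canon_row (l : List ℕ) (hs : l.Chain' (· ≤ ·)) (hm : ∀ y ∈ l, 1 ≤ y ∧ y ≤ 3) :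
    l = blk (l.count 1) (l.count 2) (l.count 3) := by
  induction l with
  | nil => rfl
  | cons x t ih =>
    have hpw := List.isChain_iff_pairwise.1 hs
    have hxle : ∀ y ∈ t, x ≤ y := (List.pairwise_cons.1 hpw).1
    have ht : t.Chain' (· ≤ ·) := List.isChain_iff_pairwise.2 (List.pairwise_cons.1 hpw).2
    have ih' := ih ht fun y hy => hm y (List.mem_cons_of_mem _ hy)
    obtain ⟨hx1, hx3⟩ := hm x List.mem_cons_self
    interval_cases x
    · have h1 : ((1 : ℕ) :: t).count 1 = t.count 1 + 1 := by simp [List.count_cons]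
      have h2 : ((1 : ℕ) :: t).count 2 = t.count 2 := by simp [List.count_cons]
      have h3 : ((1 : ℕ) :: t).count 3 = t.count 3 := by simp [List.count_cons]
      rw [h1, h2, h3]
      conv_lhs => rw [ih']
      simp [blk, List.replicate_succ]
    · have hz : t.count 1 = 0 := by
        rw [List.count_eq_zero]
        intro h1
        have := hxle 1 h1; omega
      have h1 : ((2 : ℕ) :: t).count 1 = 0 := by simp [List.count_cons, hz]
      have h2 : ((2 : ℕ) :: t).count 2 = t.count 2 + 1 := by simp [List.count_cons]
      have h3 : ((2 : ℕ) :: t).count 3 = t.count 3 := by simp [List.count_cons]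
      rw [h1, h2, h3]
      conv_lhs => rw [ih', hz]
      simp [blk, List.replicate_succ]
    · have hz1 : t.count 1 = 0 := by
        rw [List.count_eq_zero]; intro h1; have := hxle 1 h1; omega
      have hz2 : t.count 2 = 0 := by
        rw [List.count_eq_zero]; intro h1; have := hxle 2 h1; omega
      have h1 : ((3 : ℕ) :: t).count 1 = 0 := by simp [List.count_cons, hz1]
      have h2 : ((3 : ℕ) :: t).count 2 = 0 := by simp [List.count_cons, hz2]
      have h3 : ((3 : ℕ) :: t).count 3 = t.count 3 + 1 := by simp [List.count_cons]
      rw [h1, h2, h3]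
      conv_lhs => rw [ih', hz1, hz2]
      simp [blk, List.replicate_succ]



lemma getD0_two (x y : List ℕ) : ([x, y] : List (List ℕ)).getD 0 [] = x := rfl
lemma getD1_two (x y : List ℕ) : ([x, y] : List (List ℕ)).getD 1 [] = y := rfl


set_option maxHeartbeats 1600000 in
/-- action of `f_{α_1+α_2}` on two-row tableaux, type `A_2`.
Let `T` be an SSYT of shape `λ = (λ_1 ≥ λ_2 ≥ 0)` with entries in `{1,2,3}` and content
`μ = (μ_1, μ_2, μ_3)` with `μ_1 > μ_3`. Then `f_{α_1+α_2}(T) ≠ 0` and: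
(1) if `T` contains no letter `2`, then `f_{α_1+α_2}(T)` is obtained from `T` by changing the
rightmost letter `1` (the cell `(0, m_1^{(1)} - 1)`) into a letter `3`;
(2) otherwise, `f_{α_1+α_2}(T)` is obtained from `T` by changing the rightmost letter `1` into
a letter `2`, and additionally the rightmost letter `2` of the first row
(the cell `(0, m_1^{(1)} + m_2^{(1)} - 1)`) into a `3` when `m_2^{(2)} ≤ m_3^{(1)}`,
respectively the rightmost letter `2` of the second row (the cell `(1, m_2^{(2)} - 1)`)
into a `3` when `m_2^{(2)} > m_3^{(1)}`. -/
theorem statement9 (T : List (List ℕ)) (hT : IsSSYT 3 T) (hrows : T.length ≤ 2)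
    (h13 : contentOf T 3 < contentOf T 1) :
    (fA12 T).isSome ∧
    (contentOf T 2 = 0 → fA12 T = some (setCell T (0, mrow T 0 1 - 1) 3)) ∧
    (contentOf T 2 ≠ 0 →
      (mrow T 1 2 ≤ mrow T 0 3 →
        fA12 T = some (setCell (setCell T (0, mrow T 0 1 - 1) 2)
          (0, mrow T 0 1 + mrow T 0 2 - 1) 3)) ∧
      (mrow T 0 3 < mrow T 1 2 →
        fA12 T = some (setCell (setCell T (0, mrow T 0 1 - 1) 2)
          (1, mrow T 1 2 - 1) 3))) := by
  obtain ⟨hrows1, hshape, hcol, hent⟩ := hT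
  rcases T with - | ⟨r1, - | ⟨r2, rest⟩⟩
  · simp [contentOf] at h13
  · -- one-row case
    obtain ⟨hne1, hch1⟩ := hrows1 r1 (by simp)
    obtain ⟨a, b, c, hr1⟩ : ∃ a b c, r1 = blk a b c :=
      ⟨_, _, _, canon_row r1 hch1 fun y hy => hent y (by simp [hy])⟩
    subst hr1
    have hc1 : contentOf [blk a b c] 1 = a := by simp [contentOf, count_blk1]
    have hc2 : contentOf [blk a b c] 2 = b := by simp [contentOf, count_blk2]
    have hc3 : contentOf [blk a b c] 3 = c := by simp [contentOf, count_blk3]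
    have hm01 : mrow [blk a b c] 0 1 = a := by simp [mrow, count_blk1]
    have hm02 : mrow [blk a b c] 0 2 = b := by simp [mrow, count_blk2]
    have hm03 : mrow [blk a b c] 0 3 = c := by simp [mrow, count_blk3]
    have hm12 : mrow [blk a b c] 1 2 = 0 := by simp [mrow]
    rw [hc3, hc1] at h13
    refine ⟨?_, ?_, ?_⟩
    · rw [fA12_one a b c h13]; rfl
    · intro h2
      rw [hc2] at h2
      rw [fA12_one a b c h13, hm01, setCell_one0]
      refine congrArg some (single_row_eq (row_ext ?_ ?_))
      · simp only [List.length_set, blk_length]; omega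
      · intro n
        rw [getD_set]
        simp only [blk_length, getD_blk]
        split_ifs <;> omega
    · intro h2
      constructor
      · intro hle
        rw [fA12_one a b c h13, hm01, hm02, setCell_one0, setCell_one0]
        refine congrArg some (single_row_eq (row_ext ?_ ?_))
        · simp only [List.length_set, blk_length]; omega
        · intro n
          simp only [getD_set, List.length_set, blk_length, getD_blk]
          split_ifs <;> omega
      · intro hlt
        rw [hm03, hm12] at hlt
        omega
  · -- two-row case
    have hrest : rest = [] := by
      simp only [List.length_cons] at hrows
      exact List.length_eq_zero_iff.1 (by omega)
    subst hrest
    obtain ⟨hne1, hch1⟩ := hrows1 r1 (by simp)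
    obtain ⟨hne2, hch2⟩ := hrows1 r2 (by simp)
    obtain ⟨a, b, c, hr1⟩ : ∃ a b c, r1 = blk a b c :=
      ⟨_, _, _, canon_row r1 hch1 fun y hy => hent y (by simp [hy])⟩
    obtain ⟨a2, d, e, hr2⟩ : ∃ a2 d e, r2 = blk a2 d e :=
      ⟨_, _, _, canon_row r2 hch2 fun y hy => hent y (by simp [hy])⟩
    subst hr1; subst hr2
    have hne1' : 1 ≤ a + b + c := by
      by_contra h
      apply hne1
      have h1 : a = 0 ∧ b = 0 ∧ c = 0 := by omega
      obtain ⟨e1, e2, e3⟩ := h1; subst e1; subst e2; subst e3; rfl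
    have hne2' : 1 ≤ a2 + d + e := by
      by_contra h
      apply hne2
      have h1 : a2 = 0 ∧ d = 0 ∧ e = 0 := by omega
      obtain ⟨e1, e2, e3⟩ := h1; subst e1; subst e2; subst e3; rfl
    have hlen21 : a2 + d + e ≤ a + b + c := by
      simp only [List.map_cons, List.map_nil, List.Chain', List.isChain_cons_cons, blk_length] at hshape
      omega
    have ha2 : a2 = 0 := by
      have h := hcol 0 0 (by simp) (by simp [getD1_two, blk_length]; omega)
      simp only [zero_add, getD0_two, getD1_two] at h
      rw [getD_blk, getD_blk] at h
      split_ifs at h <;> omega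
    subst ha2
    have hda : d ≤ a := by
      rcases Nat.eq_zero_or_pos d with h0 | h0
      · omega
      · have h := hcol 0 (d - 1) (by simp) (by simp [getD1_two, blk_length]; omega)
        simp only [zero_add, getD0_two, getD1_two] at h
        rw [getD_blk, getD_blk] at h
        split_ifs at h <;> omega
    have hdeab : d + e ≤ a + b := by
      rcases Nat.eq_zero_or_pos e with h0 | h0
      · omega
      · have h := hcol 0 (d + e - 1) (by simp) (by simp [getD1_two, blk_length]; omega)
        simp only [zero_add, getD0_two, getD1_two] at h
        rw [getD_blk, getD_blk] at h
        split_ifs at h <;> omega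
    have hc1 : contentOf [blk a b c, blk 0 d e] 1 = a := by
      simp [contentOf, List.count_append, count_blk1]
    have hc2 : contentOf [blk a b c, blk 0 d e] 2 = b + d := by
      simp [contentOf, List.count_append, count_blk2]
    have hc3 : contentOf [blk a b c, blk 0 d e] 3 = c + e := by
      simp [contentOf, List.count_append, count_blk3]
    have hm01 : mrow [blk a b c, blk 0 d e] 0 1 = a := by simp [mrow, getD0_two, count_blk1]
    have hm02 : mrow [blk a b c, blk 0 d e] 0 2 = b := by simp [mrow, getD0_two, count_blk2]
    have hm03 : mrow [blk a b c, blk 0 d e] 0 3 = c := by simp [mrow, getD0_two, count_blk3]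
    have hm12 : mrow [blk a b c, blk 0 d e] 1 2 = d := by simp [mrow, getD1_two, count_blk2]
    rw [hc3, hc1] at h13
    refine ⟨?_, ?_, ?_⟩
    · rw [fA12_two a b c d e h13]
      split_ifs <;> rfl
    · intro h2
      rw [hc2] at h2
      rw [fA12_two a b c d e h13, if_pos (by omega), hm01, setCell_two0]
      refine congrArg some (pair_rows_eq (row_ext ?_ ?_) rfl)
      · simp only [List.length_set, blk_length]; omega
      · intro n
        rw [getD_set]
        simp only [blk_length, getD_blk]
        split_ifs <;> omega
    · intro h2
      rw [hc2] at h2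
      constructor
      · intro hle
        rw [hm12, hm03] at hle
        rw [fA12_two a b c d e h13, if_pos hle, hm01, hm02, setCell_two0, setCell_two0]
        refine congrArg some (pair_rows_eq (row_ext ?_ ?_) rfl)
        · simp only [List.length_set, blk_length]; omega
        · intro n
          simp only [getD_set, List.length_set, blk_length, getD_blk]
          split_ifs <;> omega
      · intro hlt
        rw [hm03, hm12] at hlt
        rw [fA12_two a b c d e h13, if_neg (by omega), hm01, hm12, setCell_two0, setCell_two1]
        refine congrArg some (pair_rows_eq (row_ext ?_ ?_) (row_ext ?_ ?_))
        · simp only [List.length_set, blk_length]; omega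
        · intro n
          rw [getD_set]
          simp only [blk_length, getD_blk]
          split_ifs <;> omega
        · simp only [List.length_set, blk_length]; omega
        · intro n
          rw [getD_set]
          simp only [blk_length, getD_blk]
          split_ifs <;> omega


end AtomicPaper
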